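/- arXiv:1611.09536 — 2 statements merged into one kernel-verified Lean document; each statement's English description precedes it below -/
import Mathlib

section
/- For the triangle C_3 with restraints r_1 = [{1},{1},{1}], r_2 = [{1},{2},{1}], r_3 = [{1},{2},{3}], the inequalities π_{r_1}(C_3,x) < π_{r_2}(C_3,x) < π_{r_3}(C_3,x) hold for all x > 3. -/
/-- The number of proper `x`-colourings of `G` (colours `1,…,x`) permitted by the restraint `r`,
i.e. proper colourings `c` with `c v ∉ r v` for all `v`. -/
noncomputable def rcount {V : Type} [Fintype V] (G : SimpleGraph V) (r : V → Finset ℕ)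
    (x : ℕ) : ℕ := by
  classical
  exact ((Fintype.piFinset fun _ : V => Finset.Icc 1 x).filter
    (fun c => (∀ v w, G.Adj v w → c v ≠ c w) ∧ ∀ v, c v ∉ r v)).card

/-!
Imposing the restraint `{k}` at a vertex `v` removes exactly the colourings with `c v = k` from
those with no restraint at `v`. Hence moving the restraint at `v` from `{a}` to `{b}` increases
the count iff fewer colourings have `c v = b` than `c v = a`, and the colour transposition
`swap a b` injects the former into the latter whenever it respects the other restraints.
-/

open Finset Function

section Restrained

variable {V : Type} [Fintype V] (G : SimpleGraph V) (x : ℕ)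

noncomputable def restrainedColorings (r : V → Finset ℕ) : Finset (V → ℕ) := by
  classical
  exact (Fintype.piFinset fun _ : V => Icc 1 x).filter
    (fun c => (∀ v w, G.Adj v w → c v ≠ c w) ∧ ∀ v, c v ∉ r v)

theorem rcount_eq_card_restrainedColorings (r : V → Finset ℕ) :
    rcount G r x = #(restrainedColorings G x r) :=
  rfl

variable {G x}

theorem mem_restrainedColorings {r : V → Finset ℕ} {c : V → ℕ} :
    c ∈ restrainedColorings G x r ↔
      (∀ v, c v ∈ Icc 1 x) ∧ (∀ v w, G.Adj v w → c v ≠ c w) ∧ ∀ v, c v ∉ r v := by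
  classical
  simp [restrainedColorings]

variable [DecidableEq V]

theorem rcount_update_singleton_add_card (r : V → Finset ℕ) (v : V) (k : ℕ) :
    rcount G (update r v {k}) x + #{c ∈ restrainedColorings G x (update r v ∅) | c v = k} =
      rcount G (update r v ∅) x := by
  have hfilter : restrainedColorings G x (update r v {k}) =
      {c ∈ restrainedColorings G x (update r v ∅) | ¬c v = k} := by
    ext c
    have hupdate (s : Finset ℕ) :
        (∀ w, c w ∉ update r v s w) ↔ c v ∉ s ∧ ∀ w ≠ v, c w ∉ r w :=
      forall_update_iff r fun w t => c w ∉ t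
    simp only [mem_filter, mem_restrainedColorings, hupdate, mem_singleton, notMem_empty]
    tauto
  rw [rcount_eq_card_restrainedColorings, rcount_eq_card_restrainedColorings, hfilter, add_comm,
    card_filter_add_card_filter_not]

theorem swap_comp_mem_restrainedColorings {r : V → Finset ℕ} {v : V} {a b : ℕ}
    (ha : a ∈ Icc 1 x) (hr : ∀ w, w ≠ v → b ∈ r w → a ∈ r w)
    (hr' : ∀ w, w ≠ v → ¬G.Adj v w → a ∈ r w → b ∈ r w) {c : V → ℕ}
    (hc : c ∈ restrainedColorings G x (update r v ∅)) (hcv : c v = b) :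
    Equiv.swap a b ∘ c ∈ restrainedColorings G x (update r v ∅) := by
  obtain ⟨hrange, hproper, hrestr⟩ := mem_restrainedColorings.1 hc
  refine mem_restrainedColorings.2 ⟨fun w => ?_, fun w u hwu => ?_, fun w => ?_⟩
  · have hb : b ∈ Icc 1 x := hcv ▸ hrange v
    simp only [comp_apply, Equiv.swap_apply_def]
    split_ifs <;> first | exact ha | exact hb | exact hrange w
  · exact (Equiv.injective _).ne (hproper w u hwu)
  · rcases eq_or_ne w v with rfl | hwv
    · simp
    have hcw := hrestr w
    simp only [update_of_ne hwv] at hcw ⊢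
    simp only [comp_apply, Equiv.swap_apply_def]
    split_ifs with h₁ h₂
    · exact fun hb => hcw (h₁ ▸ hr w hwv hb)
    · have hnadj : ¬G.Adj v w := fun hadj => hproper v w hadj (hcv.trans h₂.symm)
      exact fun ha' => hcw (h₂ ▸ hr' w hwv hnadj ha')
    · exact hcw

theorem card_filter_apply_eq_lt_card_filter_apply_eq {r : V → Finset ℕ} {v : V} {a b : ℕ}
    (hab : a ≠ b) (hr : ∀ w, w ≠ v → b ∈ r w → a ∈ r w)
    (hr' : ∀ w, w ≠ v → ¬G.Adj v w → a ∈ r w → b ∈ r w) {d : V → ℕ}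
    (hd : d ∈ restrainedColorings G x (update r v ∅)) (hdv : d v = a) {w : V} (hw : a ∈ r w)
    (hdw : d w = b) :
    #{c ∈ restrainedColorings G x (update r v ∅) | c v = b} <
      #{c ∈ restrainedColorings G x (update r v ∅) | c v = a} := by
  have ha : a ∈ Icc 1 x := hdv ▸ (mem_restrainedColorings.1 hd).1 v
  have hinj : Injective (fun c : V → ℕ => Equiv.swap a b ∘ c) := (Equiv.injective _).comp_left
  rw [← card_image_of_injective _ hinj]
  apply card_lt_card
  rw [ssubset_iff_of_subset]
  · refine ⟨d, mem_filter.2 ⟨hd, hdv⟩, fun hd' => ?_⟩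
    obtain ⟨c, hc, rfl⟩ := mem_image.1 hd'
    have hwv : w ≠ v := fun h => hab (hdv.symm.trans (h ▸ hdw))
    have hcw : c w = a := by simpa using congrArg (Equiv.swap a b) hdw
    have := (mem_restrainedColorings.1 (mem_filter.1 hc).1).2.2 w
    rw [update_of_ne hwv, hcw] at this
    exact this hw
  · intro c' hc'
    obtain ⟨c, hc, rfl⟩ := mem_image.1 hc'
    obtain ⟨hcT, hcv⟩ := mem_filter.1 hc
    exact mem_filter.2 ⟨swap_comp_mem_restrainedColorings ha hr hr' hcT hcv, by simp [hcv]⟩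

theorem rcount_update_lt_rcount_update {r : V → Finset ℕ} {v : V} {a b : ℕ} (hab : a ≠ b)
    (hr : ∀ w, w ≠ v → b ∈ r w → a ∈ r w)
    (hr' : ∀ w, w ≠ v → ¬G.Adj v w → a ∈ r w → b ∈ r w) {d : V → ℕ}
    (hd : d ∈ restrainedColorings G x (update r v ∅)) (hdv : d v = a) {w : V} (hw : a ∈ r w)
    (hdw : d w = b) :
    rcount G (update r v {a}) x < rcount G (update r v {b}) x := by
  have := card_filter_apply_eq_lt_card_filter_apply_eq hab hr hr' hd hdv hw hdw
  have := rcount_update_singleton_add_card (G := G) (x := x) r v a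
  have := rcount_update_singleton_add_card (G := G) (x := x) r v b
  omega

end Restrained

theorem stmt15 (x : ℕ) (hx : 3 < x) :
    rcount (⊤ : SimpleGraph (Fin 3)) ![({1} : Finset ℕ), {1}, {1}] x <
        rcount (⊤ : SimpleGraph (Fin 3)) ![({1} : Finset ℕ), {2}, {1}] x ∧
      rcount (⊤ : SimpleGraph (Fin 3)) ![({1} : Finset ℕ), {2}, {1}] x <
        rcount (⊤ : SimpleGraph (Fin 3)) ![({1} : Finset ℕ), {2}, {3}] x := by
  have hd₁ : ![2, 1, 3] ∈ restrainedColorings ⊤ x (update ![{1}, {1}, {1}] 1 ∅) := by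
    simp [mem_restrainedColorings, Fin.forall_fin_succ]
    omega
  have hd₂ : ![3, 4, 1] ∈ restrainedColorings ⊤ x (update ![{1}, {2}, {1}] 2 ∅) := by
    simp [mem_restrainedColorings, Fin.forall_fin_succ]
    omega
  have h₁ := rcount_update_lt_rcount_update (a := 1) (b := 2) (by decide) (by decide) (by decide)
    hd₁ rfl (w := 0) (by decide) rfl
  have h₂ := rcount_update_lt_rcount_update (a := 1) (b := 3) (by decide) (by decide) (by decide)
    hd₂ rfl (w := 0) (by decide) rfl
  constructor
  · convert h₁ using 2 <;> decide
  · convert h₂ using 2 <;> decide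
end

section
/- Let G be a connected bipartite graph with bipartition (V_1, V_2), |V(G)| ≥ 2, and let r be a proper k-restraint on G that is not an alternating restraint up to equivalence. Then there exist a vertex u and two distinct vertices v, w ∈ N_G(u) with |r(v) ∩ r(w)| < k; consequently Σ_{u∈V(G)} Σ_{{v,w}⊆N_G(u), v≠w} |r(v)∩r(w)| < Σ_{u∈V(G)} Σ_{{v,w}⊆N_G(u), v≠w} |r_{alt}(v)∩r_{alt}(w)|, where r_{alt} is any alternating k-restraint. -/
/-- Two restraints on `G` are equivalent if one arises from the other via a graph automorphism
together with a bijection between the sets of used restraint colours. -/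
def restraintEquiv {V : Type} [Fintype V] [DecidableEq V] (G : SimpleGraph V)
    (r r' : V → Finset ℕ) : Prop :=
  ∃ φ : G ≃g G, ∃ f : ℕ → ℕ,
    Set.InjOn f ↑(Finset.univ.biUnion r) ∧ ∀ u : V, (r u).image f = r' (φ u)

/-- `ralt` is an alternating `k`-restraint with respect to the bipartition given by `bpart`:
it is constant on each part, with two disjoint `k`-element sets of colours from `{1,…,kn}`. -/
def IsAlternating {V : Type} [Fintype V] (bpart : V → Bool) (k : ℕ)
    (ralt : V → Finset ℕ) : Prop :=
  ∃ A B : Finset ℕ, A.card = k ∧ B.card = k ∧ Disjoint A B ∧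
    A ⊆ Finset.Icc 1 (k * Fintype.card V) ∧ B ⊆ Finset.Icc 1 (k * Fintype.card V) ∧
    ∀ v : V, ralt v = if bpart v then A else B

/-- `∑_{u} ∑_{v,w ∈ N(u), v ≠ w} |s(v) ∩ s(w)|` (sum over ordered pairs of distinct
neighbours of `u`). -/
def pairSum {V : Type} [Fintype V] [DecidableEq V] (G : SimpleGraph V) [DecidableRel G.Adj]
    (s : V → Finset ℕ) : ℕ :=
  ∑ u : V, ∑ v ∈ G.neighborFinset u, ∑ w ∈ (G.neighborFinset u).erase v, (s v ∩ s w).card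

/-! If any two vertices with a common neighbour shared all `k` colours of their restraints, these
`k`-sets would coincide. Along an even walk the restraint would then be preserved two steps at a
time, so in a connected bipartite graph `r` would be constant on each part, i.e. `r` would itself
be alternating, contradicting the hypothesis. An alternating restraint attains the maximum `k` in
every term of the pair sum, so the one deficient term makes the inequality strict. -/

namespace SimpleGraph

variable {V : Type} {G : SimpleGraph V}

theorem Walk.apply_eq_of_even_length {α : Type*} {f : V → α}
    (hf : ∀ u v w, G.Adj u v → G.Adj u w → f v = f w) :
    ∀ {a b : V} (p : G.Walk a b), Even p.length → f a = f b
  | _, _, .nil, _ => rfl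
  | _, _, .cons _ .nil, hp => absurd hp (by simp)
  | _, _, .cons hax (.cons hxc p), hp =>
    (hf _ _ _ hax.symm hxc).trans <|
      apply_eq_of_even_length hf p (by simpa [Nat.even_add_one] using hp)

theorem Preconnected.apply_eq_of_coloring_eq {α : Type*} {f : V → α} (hG : G.Preconnected)
    (c : G.Coloring Bool) (hf : ∀ u v w, G.Adj u v → G.Adj u w → f v = f w) {a b : V}
    (hab : c a = c b) : f a = f b :=
  let ⟨p⟩ := hG a b
  p.apply_eq_of_even_length hf ((c.even_length_iff_congr p).mpr (by rw [hab]))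

theorem Preconnected.exists_adj_of_two_coloring [Nontrivial V] (hG : G.Preconnected) (bpart : V → Bool)
    (hbip : ∀ u v : V, G.Adj u v → bpart u ≠ bpart v) :
    ∃ p q : V, G.Adj p q ∧ bpart p = true ∧ bpart q = false := by
  obtain ⟨a⟩ : Nonempty V := inferInstance
  obtain ⟨b, hab⟩ := hG.exists_adj_of_nontrivial a
  have hne := hbip a b hab
  cases ha : bpart a
  · exact ⟨b, a, hab.symm, by simpa [ha] using hne.symm, ha⟩
  · exact ⟨a, b, hab, ha, by simpa [ha] using hne.symm⟩

end SimpleGraph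

theorem Finset.eq_of_card_le_card_inter {α : Type*} [DecidableEq α] {s t : Finset α} {k : ℕ}
    (hs : s.card = k) (ht : t.card = k) (h : k ≤ (s ∩ t).card) : s = t := by
  have hst : s ⊆ t :=
    Finset.inter_eq_left.mp (Finset.eq_of_subset_of_card_le Finset.inter_subset_left (hs ▸ h))
  exact Finset.eq_of_subset_of_card_le hst (by omega)

section Restraints

variable {V : Type} [Fintype V]

theorem restraintEquiv_refl [DecidableEq V] (G : SimpleGraph V) (r : V → Finset ℕ) : restraintEquiv G r r :=
  ⟨.refl, id, Set.injOn_id _, fun u => by simp⟩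

theorem isAlternating_of_apply_eq {bpart : V → Bool} {k : ℕ} {r : V → Finset ℕ}
    (hr : ∀ v : V, (r v).card = k ∧ r v ⊆ Finset.Icc 1 (k * Fintype.card V))
    (hconst : ∀ a b : V, bpart a = bpart b → r a = r b) {p q : V} (hpq : Disjoint (r p) (r q))
    (hp : bpart p = true) (hq : bpart q = false) : IsAlternating bpart k r := by
  refine ⟨r p, r q, (hr p).1, (hr q).1, hpq, (hr p).2, (hr q).2, fun v => ?_⟩
  cases hv : bpart v
  · exact hconst v q (hv.trans hq.symm)
  · exact hconst v p (hv.trans hp.symm)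

theorem IsAlternating.card_inter_eq {G : SimpleGraph V} {bpart : V → Bool}
    (hbip : ∀ u v : V, G.Adj u v → bpart u ≠ bpart v) {k : ℕ} {ralt : V → Finset ℕ}
    (halt : IsAlternating bpart k ralt) {u v w : V} (huv : G.Adj u v) (huw : G.Adj u w) :
    (ralt v ∩ ralt w).card = k := by
  obtain ⟨A, B, hA, hB, -, -, -, hralt⟩ := halt
  have hvw : bpart v = bpart w := by
    have h₁ := hbip u v huv
    have h₂ := hbip u w huw
    revert h₁ h₂
    cases bpart u <;> cases bpart v <;> cases bpart w <;> decide
  rw [hralt v, hralt w, hvw, Finset.inter_self]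
  split <;> assumption

theorem pairSum_lt_pairSum [DecidableEq V] (G : SimpleGraph V) [DecidableRel G.Adj] {s t : V → Finset ℕ}
    (hle : ∀ u v w : V, G.Adj u v → G.Adj u w → (s v ∩ s w).card ≤ (t v ∩ t w).card)
    (hlt : ∃ u v w : V, v ≠ w ∧ G.Adj u v ∧ G.Adj u w ∧ (s v ∩ s w).card < (t v ∩ t w).card) :
    pairSum G s < pairSum G t := by
  obtain ⟨u, v, w, hvw, huv, huw, hvw_lt⟩ := hlt
  have hle' : ∀ u, ∀ v ∈ G.neighborFinset u, ∀ w ∈ (G.neighborFinset u).erase v,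
      (s v ∩ s w).card ≤ (t v ∩ t w).card := fun u v hv w hw =>
    hle u v w ((G.mem_neighborFinset u v).mp hv)
      ((G.mem_neighborFinset u w).mp (Finset.mem_of_mem_erase hw))
  unfold pairSum
  refine Finset.sum_lt_sum (fun u' _ => Finset.sum_le_sum fun v' hv' =>
    Finset.sum_le_sum (hle' u' v' hv')) ⟨u, Finset.mem_univ u, ?_⟩
  refine Finset.sum_lt_sum (fun v' hv' => Finset.sum_le_sum (hle' u v' hv'))
    ⟨v, (G.mem_neighborFinset u v).mpr huv, ?_⟩
  exact Finset.sum_lt_sum (hle' u v ((G.mem_neighborFinset u v).mpr huv))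
    ⟨w, Finset.mem_erase.mpr ⟨hvw.symm, (G.mem_neighborFinset u w).mpr huw⟩, hvw_lt⟩

end Restraints

theorem stmt17_general {V : Type} [Fintype V] [DecidableEq V] (G : SimpleGraph V) [DecidableRel G.Adj]
    (hconn : G.Connected) (hcard : 2 ≤ Fintype.card V)
    (bpart : V → Bool) (hbip : ∀ u v : V, G.Adj u v → bpart u ≠ bpart v)
    (k : ℕ) (r : V → Finset ℕ)
    (hr : ∀ v : V, (r v).card = k ∧ r v ⊆ Finset.Icc 1 (k * Fintype.card V))
    (hproper : ∀ u v : V, G.Adj u v → Disjoint (r u) (r v))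
    (hne : ∀ ralt : V → Finset ℕ, IsAlternating bpart k ralt → ¬ restraintEquiv G r ralt) :
    (∃ u v w : V, v ≠ w ∧ G.Adj u v ∧ G.Adj u w ∧ (r v ∩ r w).card < k) ∧
      ∀ ralt : V → Finset ℕ, IsAlternating bpart k ralt →
        pairSum G r < pairSum G ralt := by
  have hdeficient : ∃ u v w : V, v ≠ w ∧ G.Adj u v ∧ G.Adj u w ∧ (r v ∩ r w).card < k := by
    by_contra! hfull
    have hnbr : ∀ u v w : V, G.Adj u v → G.Adj u w → r v = r w := fun u v w huv huw => by
      by_cases hvw : v = w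
      · rw [hvw]
      · exact Finset.eq_of_card_le_card_inter (hr v).1 (hr w).1 (hfull u v w hvw huv huw)
    have hconst : ∀ a b : V, bpart a = bpart b → r a = r b := fun _ _ hab =>
      hconn.preconnected.apply_eq_of_coloring_eq (.mk bpart (hbip _ _)) hnbr hab
    have : Nontrivial V := Fintype.one_lt_card_iff_nontrivial.mp hcard
    obtain ⟨p, q, hpq, hp, hq⟩ := hconn.preconnected.exists_adj_of_two_coloring bpart hbip
    exact hne r (isAlternating_of_apply_eq hr hconst (hproper p q hpq) hp hq)
      (restraintEquiv_refl G r)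
  refine ⟨hdeficient, fun ralt halt => pairSum_lt_pairSum G (fun u v w huv huw => ?_) ?_⟩
  · rw [halt.card_inter_eq hbip huv huw, ← (hr v).1]
    exact Finset.card_le_card Finset.inter_subset_left
  · obtain ⟨u, v, w, hvw, huv, huw, hlt⟩ := hdeficient
    exact ⟨u, v, w, hvw, huv, huw, by rwa [halt.card_inter_eq hbip huv huw]⟩

theorem stmt17 {V : Type} [Fintype V] [DecidableEq V] (G : SimpleGraph V) [DecidableRel G.Adj]
    (hconn : G.Connected) (hcard : 2 ≤ Fintype.card V)
    (bpart : V → Bool) (hbip : ∀ u v : V, G.Adj u v → bpart u ≠ bpart v)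
    (k : ℕ) (hk : 1 ≤ k) (r : V → Finset ℕ)
    (hr : ∀ v : V, (r v).card = k ∧ r v ⊆ Finset.Icc 1 (k * Fintype.card V))
    (hproper : ∀ u v : V, G.Adj u v → Disjoint (r u) (r v))
    (hne : ∀ ralt : V → Finset ℕ, IsAlternating bpart k ralt → ¬ restraintEquiv G r ralt) :
    (∃ u v w : V, v ≠ w ∧ G.Adj u v ∧ G.Adj u w ∧ (r v ∩ r w).card < k) ∧
      ∀ ralt : V → Finset ℕ, IsAlternating bpart k ralt →
        pairSum G r < pairSum G ralt :=
  stmt17_general G hconn hcard bpart hbip k r hr hproper hne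
end
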